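/- Let t ∈ ℂ with f(t) = 0. Then every complex root of the cubic polynomial s³ − t·s² + conj(t)·s − 1 has modulus 1, and the polynomial has a root of multiplicity at least 2. -/

import Mathlib

/-- The function `f(t) = |t|⁴ − 8 Re(t³) + 18 |t|² − 27`. -/
noncomputable def fdisc (t : ℂ) : ℝ :=
  ‖t‖ ^ 4 - 8 * (t ^ 3).re + 18 * ‖t‖ ^ 2 - 27

open Polynomial

/-- The characteristic cubic `s³ − t·s² + conj(t)·s − 1`. -/
noncomputable def cubic (t : ℂ) : Polynomial ℂ :=
  X ^ 3 - C t * X ^ 2 + C ((starRingEnd ℂ) t) * X - 1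

/-!
The discriminant of `s³ − t s² + conj(t) s − 1` is `f(t)`, so when `f(t) = 0` the cubic has roots
`u, u, v` with `2u + v = t`, `u² + 2uv = conj t` and `u²v = 1`. Conjugating the first relation and
eliminating `v = u⁻²` gives `(|u|² − 1)(u(|u|² + 1) − 2 conj(u)²) = 0`; in the second case taking
moduli gives `|u|(|u| − 1)² = 0`. Hence `|u| = 1`, and then `|v| = |u|⁻² = 1`.
-/

open ComplexConjugate

noncomputable def cubicCoeffs (t : ℂ) : Cubic ℂ := ⟨1, -t, conj t, -1⟩

lemma toPoly_cubicCoeffs (t : ℂ) : (cubicCoeffs t).toPoly = cubic t := by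
  simp only [Cubic.toPoly, cubicCoeffs, cubic, C_1, one_mul, C_neg, neg_mul]
  ring

lemma roots_cubicCoeffs (t : ℂ) : (cubicCoeffs t).roots = (cubic t).roots := by
  rw [Cubic.roots, toPoly_cubicCoeffs]

lemma discr_cubicCoeffs (t : ℂ) : (cubicCoeffs t).discr = fdisc t := by
  have hnorm : ((‖t‖ ^ 2 : ℝ) : ℂ) = t * conj t := by push_cast; exact (Complex.mul_conj' t).symm
  have hre : (((t ^ 3).re : ℝ) : ℂ) = (t ^ 3 + conj t ^ 3) / 2 := by
    rw [← map_pow, Complex.add_conj]; push_cast; ring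
  simp only [Cubic.discr, cubicCoeffs, fdisc]
  push_cast
  rw [show ((‖t‖ : ℝ) : ℂ) ^ 4 = (((‖t‖ ^ 2 : ℝ)) : ℂ) ^ 2 by push_cast; ring,
    show ((‖t‖ : ℝ) : ℂ) ^ 2 = (((‖t‖ ^ 2 : ℝ)) : ℂ) by push_cast; ring, hnorm, hre]
  ring

lemma cubic_ne_zero (t : ℂ) : cubic t ≠ 0 := by
  rw [← toPoly_cubicCoeffs]; exact Cubic.ne_zero_of_a_ne_zero one_ne_zero

lemma exists_roots_cubicCoeffs_eq_double {t : ℂ} (hf : fdisc t = 0) :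
    ∃ u v, (cubicCoeffs t).roots = {u, u, v} := by
  obtain ⟨x, y, z, h3⟩ := (Cubic.splits_iff_roots_eq_three (φ := RingHom.id ℂ)
    (P := cubicCoeffs t) one_ne_zero).mp (IsAlgClosed.splits _)
  have hdiscr : ¬ (x ≠ y ∧ x ≠ z ∧ y ≠ z) := by
    rw [← Cubic.discr_ne_zero_iff_roots_ne one_ne_zero h3, discr_cubicCoeffs, hf]
    simp
  have h3' : (cubicCoeffs t).roots = {x, y, z} := h3
  by_cases hxy : x = y
  · exact ⟨x, z, by rw [h3', hxy]⟩
  by_cases hxz : x = z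
  · exact ⟨x, y, by rw [h3', hxz, Multiset.pair_comm]⟩
  · have hyz : y = z := by tauto
    refine ⟨y, x, ?_⟩
    rw [h3', hyz, Multiset.insert_eq_cons, Multiset.insert_eq_cons, Multiset.cons_swap,
      ← Multiset.insert_eq_cons, ← Multiset.insert_eq_cons, Multiset.pair_comm]

lemma vieta_of_roots_cubicCoeffs_eq_double {t u v : ℂ}
    (h : (cubicCoeffs t).roots = {u, u, v}) :
    2 * u + v = t ∧ u ^ 2 + 2 * u * v = conj t ∧ u ^ 2 * v = 1 := by
  have hb := Cubic.b_eq_three_roots (φ := RingHom.id ℂ) (P := cubicCoeffs t) one_ne_zero h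
  have hc := Cubic.c_eq_three_roots (φ := RingHom.id ℂ) (P := cubicCoeffs t) one_ne_zero h
  have hd := Cubic.d_eq_three_roots (φ := RingHom.id ℂ) (P := cubicCoeffs t) one_ne_zero h
  simp only [cubicCoeffs, RingHom.id_apply] at hb hc hd
  exact ⟨by linear_combination hb, by linear_combination -hc, by linear_combination hd⟩

lemma norm_eq_one_of_conj_eq {u v : ℂ} (hv : u ^ 2 * v = 1)
    (h : conj (2 * u + v) = u ^ 2 + 2 * u * v) : ‖u‖ = 1 := by
  have hu : u ≠ 0 := by rintro rfl; simp at hv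
  have hvc : conj u ^ 2 * conj v = 1 := by simpa using congrArg conj hv
  have hr : u * conj u = ((‖u‖ ^ 2 : ℝ) : ℂ) := by push_cast; exact Complex.mul_conj' u
  simp only [map_add, map_mul, map_ofNat] at h
  have key : (u * conj u - 1) * (u * (u * conj u + 1) - 2 * conj u ^ 2) = 0 := by
    linear_combination -(u * conj u ^ 2) * h + u * hvc - 2 * conj u ^ 2 * hv
  rcases mul_eq_zero.mp key with h1 | h2
  · have hsq : ‖u‖ ^ 2 = 1 := by exact_mod_cast hr.symm.trans (sub_eq_zero.mp h1)
    exact (pow_eq_one_iff_of_nonneg (norm_nonneg u) two_ne_zero).mp hsq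
  · have hnorms := congrArg norm (sub_eq_zero.mp h2)
    rw [hr, show ((‖u‖ ^ 2 : ℝ) : ℂ) + 1 = ((‖u‖ ^ 2 + 1 : ℝ) : ℂ) by push_cast; ring] at hnorms
    simp only [norm_mul, Complex.norm_real, Real.norm_eq_abs, norm_pow, Complex.norm_conj,
      Complex.norm_ofNat, abs_of_pos (by positivity : (0 : ℝ) < ‖u‖ ^ 2 + 1)] at hnorms
    have hcube : ‖u‖ * (‖u‖ - 1) ^ 2 = 0 := by linear_combination hnorms
    rcases mul_eq_zero.mp hcube with h0 | h1
    · exact absurd (norm_eq_zero.mp h0) hu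
    · linear_combination (pow_eq_zero_iff two_ne_zero).mp h1

theorem roots_of_fzero (t : ℂ) (hf : fdisc t = 0) :
    (∀ z : ℂ, (cubic t).IsRoot z → ‖z‖ = 1) ∧
      ∃ z : ℂ, 2 ≤ (cubic t).rootMultiplicity z := by
  obtain ⟨u, v, hroots⟩ := exists_roots_cubicCoeffs_eq_double hf
  obtain ⟨hsum, hpair, hprod⟩ := vieta_of_roots_cubicCoeffs_eq_double hroots
  have hu : ‖u‖ = 1 := norm_eq_one_of_conj_eq hprod (by rw [hsum, hpair])
  have hv : ‖v‖ = 1 := by simpa [hu] using congrArg norm hprod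
  rw [roots_cubicCoeffs] at hroots
  refine ⟨fun z hz => ?_, u, ?_⟩
  · have hz : z ∈ ({u, u, v} : Multiset ℂ) := hroots ▸ (mem_roots (cubic_ne_zero t)).mpr hz
    simp only [Multiset.insert_eq_cons, Multiset.mem_cons, Multiset.mem_singleton] at hz
    rcases hz with rfl | rfl | rfl <;> assumption
  · rw [← count_roots, hroots]
    simp
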